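/- arXiv:1407.1144 — 10 statements merged into one kernel-verified Lean document; each statement's English description precedes it below -/
import Mathlib

section
/- Let F be a real n×n matrix with F + Fᵀ positive semidefinite. Then ‖(F + I)⁻¹(F + Fᵀ)(F + I)⁻ᵀ‖ ≤ 1/2, where ‖·‖ is the spectral norm. -/
/-!
Write `C = (F + 1)⁻¹ (F - 1)` for the Cayley transform of `F`. Since
`(F + 1)(F + 1)ᴴ - 2 (F + Fᴴ) = (F - 1)(F - 1)ᴴ`, the positive semidefinite matrix
`M = (F + 1)⁻¹ (F + Fᴴ) (F + 1)⁻ᴴ` equals `(1 - C Cᴴ) / 2`, so `0 ≤ M ≤ 1 / 2` in the Loewner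
order. The norm of a positive operator is the supremum of its Rayleigh quotients, hence
`‖M‖ ≤ 1 / 2`.
-/

open Matrix

noncomputable def specNorm {n : ℕ} (A : Matrix (Fin n) (Fin n) ℝ) : ℝ :=
  ‖Matrix.toEuclideanCLM (𝕜 := ℝ) A‖

open scoped ComplexOrder

namespace ContinuousLinearMap

variable {𝕜 E : Type*} [RCLike 𝕜] [NormedAddCommGroup E] [InnerProductSpace 𝕜 E]

theorem norm_le_of_nonneg_of_le_smul_one {T : E →L[𝕜] E} (hT : 0 ≤ T) {c : ℝ} (hc : 0 ≤ c)
    (h : T ≤ (c : 𝕜) • 1) : ‖T‖ ≤ c := by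
  rw [nonneg_iff_isPositive] at hT
  rw [norm_eq_iSup_rayleighQuotient T hT.isSymmetric]
  refine ciSup_le fun x => ?_
  have hle : T.reApplyInnerSelf x ≤ c * ‖x‖ ^ 2 := by
    have := (le_def _ _).1 h |>.re_inner_nonneg_left x
    simpa [_root_.sub_apply, inner_sub_left, inner_smul_left, reApplyInnerSelf,
      ← real_inner_self_eq_norm_sq, inner_self_eq_norm_sq] using this
  rw [abs_of_nonneg (div_nonneg (hT.2 x) (by positivity))]
  exact div_le_of_le_mul₀ (by positivity) hc hle

end ContinuousLinearMap

namespace Matrix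

variable {ι 𝕜 : Type*} [Fintype ι] [DecidableEq ι] [RCLike 𝕜]

theorem isPositive_toEuclideanCLM_iff {M : Matrix ι ι 𝕜} :
    (toEuclideanCLM (𝕜 := 𝕜) M).IsPositive ↔ M.PosSemidef :=
  isPositive_toEuclideanLin_iff

theorem norm_toEuclideanCLM_le_of_posSemidef {M : Matrix ι ι 𝕜} (hM : M.PosSemidef) {c : ℝ}
    (hc : 0 ≤ c) (h : ((c : 𝕜) • 1 - M).PosSemidef) : ‖toEuclideanCLM (𝕜 := 𝕜) M‖ ≤ c := by
  refine ContinuousLinearMap.norm_le_of_nonneg_of_le_smul_one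
    ((ContinuousLinearMap.nonneg_iff_isPositive _).2 (isPositive_toEuclideanCLM_iff.2 hM)) hc ?_
  rw [ContinuousLinearMap.le_def, ← map_one (toEuclideanCLM (n := ι) (𝕜 := 𝕜)), ← map_smul,
    ← map_sub]
  exact isPositive_toEuclideanCLM_iff.2 h

theorem isUnit_det_add_one_of_posSemidef_add_conjTranspose {F : Matrix ι ι 𝕜}
    (hF : (F + Fᴴ).PosSemidef) : IsUnit (F + 1).det := by
  rw [isUnit_iff_ne_zero]
  intro h
  obtain ⟨v, hv, hv0⟩ := exists_mulVec_eq_zero_iff.2 h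
  have hFv : F *ᵥ v = -v := by
    rwa [add_mulVec, one_mulVec, add_eq_zero_iff_eq_neg] at hv0
  have hquad : star v ⬝ᵥ ((F + Fᴴ) *ᵥ v) = -2 * (star v ⬝ᵥ v) := by
    rw [add_mulVec, dotProduct_add, dotProduct_mulVec _ Fᴴ, ← star_mulVec, hFv]
    simp only [dotProduct_neg, star_neg, neg_dotProduct]
    ring
  have hpos : 0 < star v ⬝ᵥ v := dotProduct_star_self_pos_iff.2 hv
  have hnonneg := hquad ▸ hF.dotProduct_mulVec_nonneg v
  exact (mul_neg_of_neg_of_pos (by norm_num) hpos).not_ge hnonneg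

theorem inv_add_one_mul_add_conjTranspose_mul_eq {F : Matrix ι ι 𝕜} (hF : IsUnit (F + 1).det) :
    (F + 1)⁻¹ * (F + Fᴴ) * (F + 1)⁻¹ᴴ =
      (2 : 𝕜)⁻¹ • (1 - (F + 1)⁻¹ * (F - 1) * ((F + 1)⁻¹ * (F - 1))ᴴ) := by
  set B := (F + 1)⁻¹
  have hB : B * (F + 1) = 1 := nonsing_inv_mul _ hF
  have hBH : (F + 1)ᴴ * Bᴴ = 1 := by rw [← conjTranspose_mul, hB, conjTranspose_one]
  have hC : B * (F - 1) * (B * (F - 1))ᴴ = 1 - 2 • (B * (F + Fᴴ) * Bᴴ) :=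
    calc B * (F - 1) * (B * (F - 1))ᴴ
        = B * (F + 1) * ((F + 1)ᴴ * Bᴴ) - 2 • (B * (F + Fᴴ) * Bᴴ) := by
          simp only [conjTranspose_mul, conjTranspose_add, conjTranspose_sub, conjTranspose_one]
          noncomm_ring
      _ = 1 - 2 • (B * (F + Fᴴ) * Bᴴ) := by rw [hB, hBH, one_mul]
  rw [hC, sub_sub_cancel]
  module

theorem norm_toEuclideanCLM_inv_add_one_mul_mul_le {F : Matrix ι ι 𝕜}
    (hF : (F + Fᴴ).PosSemidef) :
    ‖toEuclideanCLM (n := ι) (𝕜 := 𝕜) ((F + 1)⁻¹ * (F + Fᴴ) * (F + 1)⁻¹ᴴ)‖ ≤ 1 / 2 := by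
  have hdet := isUnit_det_add_one_of_posSemidef_add_conjTranspose hF
  refine norm_toEuclideanCLM_le_of_posSemidef (hF.mul_mul_conjTranspose_same _) one_half_pos.le ?_
  set C := (F + 1)⁻¹ * (F - 1)
  have hC : ((1 / 2 : ℝ) : 𝕜) • 1 - (2 : 𝕜)⁻¹ • (1 - C * Cᴴ) = (2 : 𝕜)⁻¹ • (C * Cᴴ) := by
    rw [one_div, RCLike.ofReal_inv, RCLike.ofReal_ofNat, smul_sub, sub_sub_cancel]
  rw [inv_add_one_mul_add_conjTranspose_mul_eq hdet, hC]
  exact (posSemidef_self_mul_conjTranspose C).smul (inv_nonneg.2 zero_le_two)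

end Matrix

theorem stmt1 {n : ℕ} (F : Matrix (Fin n) (Fin n) ℝ)
    (hF : (F + Fᵀ).PosSemidef) :
    specNorm ((F + 1)⁻¹ * (F + Fᵀ) * ((F + 1)⁻¹)ᵀ) ≤ 1 / 2 := by
  have hF' : (F + Fᴴ).PosSemidef := by rwa [conjTranspose_eq_transpose_of_trivial]
  simpa only [specNorm, conjTranspose_eq_transpose_of_trivial] using
    norm_toEuclideanCLM_inv_add_one_mul_mul_le hF'
end

section
/- Let M be a positive definite diagonal n×n matrix, L an n×n matrix, ν > 0, Π diagonal with entries in {0,1}, and γ₁, γ₂ ≥ 0 with γ₁ + γ₂ = 1. Define S = νL(I − γ₁Π)M⁻¹Lᵀ + (I − γ₂Π)M + √ν·√(γ₁γ₂)·(LΠ + ΠLᵀ), and Ŝ = L₁M⁻¹L₁ᵀ with L₁ = √ν·L(I − γ₁Π)^{1/2} + (I − γ₂Π)^{1/2}M. Then Ŝ = S + √ν·(L(I − Π) + (I − Π)Lᵀ). -/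
open Matrix

theorem stmt6 {n : ℕ} (m d : Fin n → ℝ) (hm : ∀ i, 0 < m i)
    (hd : ∀ i, d i = 0 ∨ d i = 1)
    (L : Matrix (Fin n) (Fin n) ℝ) (ν γ₁ γ₂ : ℝ)
    (hν : 0 < ν) (h1 : 0 ≤ γ₁) (h2 : 0 ≤ γ₂) (h : γ₁ + γ₂ = 1) :
    let M : Matrix (Fin n) (Fin n) ℝ := diagonal m
    let Pk : Matrix (Fin n) (Fin n) ℝ := diagonal d
    let L₁ : Matrix (Fin n) (Fin n) ℝ :=
      Real.sqrt ν • (L * diagonal (fun i => Real.sqrt (1 - γ₁ * d i))) +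
        diagonal (fun i => Real.sqrt (1 - γ₂ * d i)) * M
    let S : Matrix (Fin n) (Fin n) ℝ :=
      ν • (L * (1 - γ₁ • Pk) * M⁻¹ * Lᵀ) + (1 - γ₂ • Pk) * M +
        (Real.sqrt ν * Real.sqrt (γ₁ * γ₂)) • (L * Pk + Pk * Lᵀ)
    L₁ * M⁻¹ * L₁ᵀ = S + Real.sqrt ν • (L * (1 - Pk) + (1 - Pk) * Lᵀ) := by
  intro M Pk L₁ S
  have hnn1 : ∀ x, 0 ≤ 1 - γ₁ * d x := by
    intro x; rcases hd x with h0 | h0 <;> rw [h0] <;> nlinarith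
  have hnn2 : ∀ x, 0 ≤ 1 - γ₂ * d x := by
    intro x; rcases hd x with h0 | h0 <;> rw [h0] <;> nlinarith
  have hMinv : M⁻¹ = diagonal (fun i => (m i)⁻¹) := by
    apply Matrix.inv_eq_right_inv
    rw [show M = diagonal m from rfl, diagonal_mul_diagonal]
    ext i j
    by_cases hij : i = j <;>
      simp [hij, Matrix.one_apply, diagonal_apply, mul_inv_cancel₀ (hm _).ne']
  have e1 : (1 : Matrix (Fin n) (Fin n) ℝ) - γ₁ • Pk = diagonal (fun i => 1 - γ₁ * d i) := by
    ext i j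
    by_cases hij : i = j <;> simp [Pk, hij, Matrix.one_apply, diagonal_apply]
  have e2 : (1 : Matrix (Fin n) (Fin n) ℝ) - γ₂ • Pk = diagonal (fun i => 1 - γ₂ * d i) := by
    ext i j
    by_cases hij : i = j <;> simp [Pk, hij, Matrix.one_apply, diagonal_apply]
  have e3 : (1 : Matrix (Fin n) (Fin n) ℝ) - Pk = diagonal (fun i => 1 - d i) := by
    ext i j
    by_cases hij : i = j <;> simp [Pk, hij, Matrix.one_apply, diagonal_apply]
  have hc : ∀ x, Real.sqrt (1 - γ₁ * d x) * Real.sqrt (1 - γ₂ * d x) =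
      Real.sqrt (γ₁ * γ₂) * d x + (1 - d x) := by
    intro x
    rcases hd x with h0 | h0 <;> rw [h0]
    · simp
    · have e : 1 - γ₁ * 1 = γ₂ := by linarith
      have e' : 1 - γ₂ * 1 = γ₁ := by linarith
      rw [e, e', ← Real.sqrt_mul h2, mul_comm γ₂ γ₁]
      ring
  simp only [M, Pk, L₁, S, hMinv, e1, e2, e3]
  ext i j
  simp [Matrix.mul_apply, Matrix.add_apply, Matrix.smul_apply,
    Matrix.diagonal_apply, transpose_apply, Finset.mul_sum,
    Finset.sum_mul, mul_ite, ite_mul, Finset.sum_add_distrib]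
  have key : ∀ x : Fin n,
      (Real.sqrt ν * (L i x * Real.sqrt (1 - γ₁ * d x)) +
          if i = x then Real.sqrt (1 - γ₂ * d i) * m i else 0) * (m x)⁻¹ *
        (Real.sqrt ν * (Real.sqrt (1 - γ₁ * d x) * L j x) +
          if x = j then Real.sqrt (1 - γ₂ * d x) * m x else 0) =
      ν * (L i x * (1 - γ₁ * d x) * (m x)⁻¹ * L j x) +
        ((if x = j then Real.sqrt ν * L i x *
            (Real.sqrt (1 - γ₁ * d x) * Real.sqrt (1 - γ₂ * d x)) else 0) +
         (if i = x then Real.sqrt ν *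
            (Real.sqrt (1 - γ₁ * d x) * Real.sqrt (1 - γ₂ * d x)) * L j x else 0) +
         (if i = x then (if x = j then (1 - γ₂ * d x) * m x else 0) else 0)) := by
    intro x
    have hw : Real.sqrt ν * Real.sqrt ν = ν := Real.mul_self_sqrt hν.le
    have hs : Real.sqrt (1 - γ₁ * d x) * Real.sqrt (1 - γ₁ * d x) = 1 - γ₁ * d x :=
      Real.mul_self_sqrt (hnn1 x)
    have ht : Real.sqrt (1 - γ₂ * d x) * Real.sqrt (1 - γ₂ * d x) = 1 - γ₂ * d x :=
      Real.mul_self_sqrt (hnn2 x)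
    have hμ : (m x)⁻¹ * m x = 1 := inv_mul_cancel₀ (hm x).ne'
    by_cases hix : i = x <;> by_cases hxj : x = j
    · subst hix; subst hxj
      simp only [eq_self_iff_true, if_true]
      linear_combination (L i i * L i i * (m i)⁻¹ * (Real.sqrt (1 - γ₁ * d i) *
          Real.sqrt (1 - γ₁ * d i))) * hw +
        (L i i * L i i * (m i)⁻¹ * ν) * hs +
        (Real.sqrt ν * L i i * Real.sqrt (1 - γ₁ * d i) * Real.sqrt (1 - γ₂ * d i) +
         Real.sqrt ν * L i i * Real.sqrt (1 - γ₁ * d i) * Real.sqrt (1 - γ₂ * d i) +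
         Real.sqrt (1 - γ₂ * d i) * Real.sqrt (1 - γ₂ * d i) * m i) * hμ +
        (m i) * ht
    · subst hix
      simp only [eq_self_iff_true, if_true, if_neg hxj]
      linear_combination (L i i * L j i * (m i)⁻¹ * (Real.sqrt (1 - γ₁ * d i) *
          Real.sqrt (1 - γ₁ * d i))) * hw +
        (L i i * L j i * (m i)⁻¹ * ν) * hs +
        (Real.sqrt ν * L j i * Real.sqrt (1 - γ₁ * d i) * Real.sqrt (1 - γ₂ * d i)) * hμ
    · subst hxj
      simp only [eq_self_iff_true, if_true, if_neg hix]
      linear_combination (L i x * L x x * (m x)⁻¹ * (Real.sqrt (1 - γ₁ * d x) *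
          Real.sqrt (1 - γ₁ * d x))) * hw +
        (L i x * L x x * (m x)⁻¹ * ν) * hs +
        (Real.sqrt ν * L i x * Real.sqrt (1 - γ₁ * d x) * Real.sqrt (1 - γ₂ * d x)) * hμ
    · simp only [if_neg hix, if_neg hxj]
      linear_combination (L i x * L j x * (m x)⁻¹ * (Real.sqrt (1 - γ₁ * d x) *
          Real.sqrt (1 - γ₁ * d x))) * hw +
        (L i x * L j x * (m x)⁻¹ * ν) * hs
  rw [Finset.sum_congr rfl (fun x _ => key x)]
  simp only [Finset.sum_add_distrib, Finset.sum_ite_eq, Finset.sum_ite_eq',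
    Finset.mem_univ, if_true, hc]
  by_cases hij : i = j
  · subst hij; simp only [eq_self_iff_true, if_true]; ring
  · simp only [if_neg hij]; ring
end

section
/- Let F be a real n×n matrix with F + Fᵀ ⪰ 0 (no constraints active: Π = 0). Then every eigenvalue λ of the generalized eigenproblem (FFᵀ + I)x = λ(F + I)(F + I)ᵀx satisfies 1/2 ≤ λ ≤ 1. -/
/-!
Put `A = F Fᵀ + I` and `S = F + Fᵀ`. Then `(F + I)(F + I)ᵀ = A + S` and `(F - I)(F - I)ᵀ = A - S`,
so `0 ⪯ S ⪯ A` with `A ≻ 0`. Testing the eigen-equation `A x = λ (A + S) x` against `x` gives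
`λ = a / (a + s)` with `a = xᵀ A x > 0` and `0 ≤ s = xᵀ S x ≤ a`, whence `1/2 ≤ λ ≤ 1`.
-/

open Matrix

namespace Matrix

variable {ι R : Type*} [Fintype ι]

theorem add_one_mul_transpose_add_one [DecidableEq ι] [CommRing R] (F : Matrix ι ι R) :
    (F + 1) * (F + 1)ᵀ = F * Fᵀ + 1 + (F + Fᵀ) := by
  simp only [transpose_add, transpose_one]
  noncomm_ring

theorem sub_one_mul_transpose_sub_one [DecidableEq ι] [CommRing R] (F : Matrix ι ι R) :
    (F - 1) * (F - 1)ᵀ = F * Fᵀ + 1 - (F + Fᵀ) := by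
  simp only [transpose_sub, transpose_one]
  noncomm_ring

theorem posSemidef_self_mul_transpose (F : Matrix ι ι ℝ) : (F * Fᵀ).PosSemidef := by
  simpa only [conjTranspose_eq_transpose_of_trivial] using posSemidef_self_mul_conjTranspose F

theorem mem_Icc_of_mulVec_eq_smul_add_mulVec {A S : Matrix ι ι ℝ} (hA : A.PosDef)
    (hS : S.PosSemidef) (hAS : (A - S).PosSemidef) {lam : ℝ} {x : ι → ℝ} (hx : x ≠ 0)
    (h : A *ᵥ x = lam • (A + S) *ᵥ x) : lam ∈ Set.Icc (1 / 2) 1 := by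
  have ha : 0 < x ⬝ᵥ A *ᵥ x := by simpa using hA.dotProduct_mulVec_pos hx
  have hs : 0 ≤ x ⬝ᵥ S *ᵥ x := by simpa using hS.dotProduct_mulVec_nonneg x
  have hsa : x ⬝ᵥ S *ᵥ x ≤ x ⬝ᵥ A *ᵥ x := by
    simpa [sub_mulVec] using hAS.dotProduct_mulVec_nonneg x
  have hlam : x ⬝ᵥ A *ᵥ x = lam * (x ⬝ᵥ A *ᵥ x + x ⬝ᵥ S *ᵥ x) := by
    rw [← dotProduct_add, ← add_mulVec, ← smul_eq_mul, ← dotProduct_smul, ← h]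
  constructor <;> nlinarith

end Matrix

theorem stmt9 {n : ℕ} (F : Matrix (Fin n) (Fin n) ℝ)
    (hF : (F + Fᵀ).PosSemidef) :
    ∀ (lam : ℝ) (x : Fin n → ℝ), x ≠ 0 →
      (F * Fᵀ + 1).mulVec x = lam • ((F + 1) * (F + 1)ᵀ).mulVec x →
      1 / 2 ≤ lam ∧ lam ≤ 1 := by
  intro lam x hx h
  have hA : (F * Fᵀ + 1).PosDef := PosDef.posSemidef_add (posSemidef_self_mul_transpose F) .one
  have hAS : (F * Fᵀ + 1 - (F + Fᵀ)).PosSemidef := by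
    rw [← sub_one_mul_transpose_sub_one]
    exact posSemidef_self_mul_transpose (F - 1)
  rw [add_one_mul_transpose_add_one] at h
  exact mem_Icc_of_mulVec_eq_smul_add_mulVec hA hF hAS hx h
end

section
/- Let F be a real n×n matrix with F + Fᵀ ⪰ 0 and Π diagonal with entries in {0,1}. With γ₁ = γ₂ = 1/2, define H = (F − I)(I − Π/2)(F − I)ᵀ + F + Fᵀ and Ĥ = (F + I)(I − Π/2)(F + I)ᵀ. Then every eigenvalue λ of the pencil H y = λ Ĥ y satisfies 1/2 ≤ λ ≤ 3. -/
/-!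
Write `u = Fᵀ y` and `I - Π/2 = diag c` with every `cᵢ ∈ [1/2, 1]`. Then
`yᵀ H y = (u - y)ᵀ diag c (u - y) + 2 uᵀy` and `yᵀ Ĥ y = (u + y)ᵀ diag c (u + y)`,
while `uᵀy = yᵀ (F + Fᵀ) y / 2 ≥ 0`. An eigenvalue of the pencil is the Rayleigh quotient
`yᵀ H y / yᵀ Ĥ y`, and comparing the two forms coordinate by coordinate gives
`yᵀ Ĥ y / 2 ≤ yᵀ H y ≤ 3 yᵀ Ĥ y - 2 uᵀy`.
-/

open Matrix

section QuadraticForms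

variable {m : Type*} [Fintype m]

lemma dotProduct_mul_mul_transpose_mulVec {R : Type*} [CommSemiring R] (A B : Matrix m m R)
    (y : m → R) : y ⬝ᵥ (A * B * Aᵀ) *ᵥ y = (Aᵀ *ᵥ y) ⬝ᵥ B *ᵥ (Aᵀ *ᵥ y) := by
  rw [← mulVec_mulVec, ← mulVec_mulVec, dotProduct_mulVec, ← mulVec_transpose]

lemma dotProduct_mulVec_eq_transpose_mulVec_dotProduct {R : Type*} [CommSemiring R]
    (F : Matrix m m R) (v w : m → R) : v ⬝ᵥ F *ᵥ w = (Fᵀ *ᵥ v) ⬝ᵥ w := by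
  rw [dotProduct_mulVec, mulVec_transpose]

lemma dotProduct_transpose_mulVec_nonneg {F : Matrix m m ℝ} (hF : (F + Fᵀ).PosSemidef)
    (y : m → ℝ) : 0 ≤ (Fᵀ *ᵥ y) ⬝ᵥ y := by
  have h := hF.dotProduct_mulVec_nonneg y
  rw [star_trivial, add_mulVec, dotProduct_add,
    dotProduct_mulVec_eq_transpose_mulVec_dotProduct F, dotProduct_comm y] at h
  linarith

lemma mem_Icc_of_mulVec_eq_smul_mulVec {H K : Matrix m m ℝ} {y : m → ℝ} {a b lam : ℝ}
    (hK : 0 < y ⬝ᵥ K *ᵥ y) (ha : a * (y ⬝ᵥ K *ᵥ y) ≤ y ⬝ᵥ H *ᵥ y)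
    (hb : y ⬝ᵥ H *ᵥ y ≤ b * (y ⬝ᵥ K *ᵥ y)) (h : H *ᵥ y = lam • K *ᵥ y) :
    a ≤ lam ∧ lam ≤ b := by
  rw [h, dotProduct_smul, smul_eq_mul] at ha hb
  exact ⟨le_of_mul_le_mul_right ha hK, le_of_mul_le_mul_right hb hK⟩

end QuadraticForms

section WeightBounds

variable {c : ℝ}

-- The difference of the two sides is `(1 - c) (u + y)² + (2c - 1) (u - y)²`.
lemma mul_add_sq_le_two_mul (hc₀ : 1 / 2 ≤ c) (hc₁ : c ≤ 1) (u y : ℝ) :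
    c * (u + y) ^ 2 ≤ 2 * (c * (u - y) ^ 2 + 2 * (u * y)) := by
  nlinarith [mul_nonneg (sub_nonneg.2 hc₁) (sq_nonneg (u + y)),
    mul_nonneg (sub_nonneg.2 hc₀) (sq_nonneg (u - y))]

-- The difference of the two sides is `2 (1 - c) (u² + y²) + 2 (2c - 1) (u + y)²`.
lemma mul_sub_sq_add_le_three_mul (hc₀ : 1 / 2 ≤ c) (hc₁ : c ≤ 1) (u y : ℝ) :
    c * (u - y) ^ 2 + 4 * (u * y) ≤ 3 * (c * (u + y) ^ 2) := by
  nlinarith [mul_nonneg (sub_nonneg.2 hc₁) (add_nonneg (sq_nonneg u) (sq_nonneg y)),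
    mul_nonneg (sub_nonneg.2 hc₀) (sq_nonneg (u + y))]

lemma half_sq_add_mul_le_mul_add_sq (hc₀ : 1 / 2 ≤ c) (u y : ℝ) :
    y ^ 2 / 2 + u * y ≤ c * (u + y) ^ 2 := by
  nlinarith [mul_nonneg (sub_nonneg.2 hc₀) (sq_nonneg (u + y)), sq_nonneg u]

end WeightBounds

section DiagonalForms

variable {m : Type*} [Fintype m] [DecidableEq m] {c : m → ℝ}

lemma dotProduct_diagonal_mulVec_self (c v : m → ℝ) :
    v ⬝ᵥ diagonal c *ᵥ v = ∑ i, c i * v i ^ 2 := by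
  simp only [dotProduct, mulVec_diagonal]
  exact Finset.sum_congr rfl fun i _ => by ring

lemma diagonal_form_add_le_two_mul (hc₀ : ∀ i, 1 / 2 ≤ c i) (hc₁ : ∀ i, c i ≤ 1)
    (u y : m → ℝ) :
    (u + y) ⬝ᵥ diagonal c *ᵥ (u + y)
      ≤ 2 * ((u - y) ⬝ᵥ diagonal c *ᵥ (u - y) + 2 * (u ⬝ᵥ y)) := by
  rw [dotProduct_diagonal_mulVec_self, dotProduct_diagonal_mulVec_self]
  simp only [dotProduct, Pi.add_apply, Pi.sub_apply, Finset.mul_sum, ← Finset.sum_add_distrib]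
  exact Finset.sum_le_sum fun i _ => mul_add_sq_le_two_mul (hc₀ i) (hc₁ i) (u i) (y i)

lemma diagonal_form_sub_add_le_three_mul (hc₀ : ∀ i, 1 / 2 ≤ c i) (hc₁ : ∀ i, c i ≤ 1)
    (u y : m → ℝ) :
    (u - y) ⬝ᵥ diagonal c *ᵥ (u - y) + 4 * (u ⬝ᵥ y)
      ≤ 3 * ((u + y) ⬝ᵥ diagonal c *ᵥ (u + y)) := by
  rw [dotProduct_diagonal_mulVec_self, dotProduct_diagonal_mulVec_self]
  simp only [dotProduct, Pi.add_apply, Pi.sub_apply, Finset.mul_sum, ← Finset.sum_add_distrib]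
  exact Finset.sum_le_sum fun i _ => mul_sub_sq_add_le_three_mul (hc₀ i) (hc₁ i) (u i) (y i)

lemma diagonal_form_add_pos (hc₀ : ∀ i, 1 / 2 ≤ c i) {u y : m → ℝ} (huy : 0 ≤ u ⬝ᵥ y)
    (hy : y ≠ 0) : 0 < (u + y) ⬝ᵥ diagonal c *ᵥ (u + y) := by
  have hyy : 0 < y ⬝ᵥ y := by simpa using dotProduct_star_self_pos_iff.2 hy
  have hle : (y ⬝ᵥ y) / 2 + u ⬝ᵥ y ≤ (u + y) ⬝ᵥ diagonal c *ᵥ (u + y) := by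
    rw [dotProduct_diagonal_mulVec_self]
    simp only [dotProduct, Pi.add_apply]
    rw [Finset.sum_div, ← Finset.sum_add_distrib]
    exact Finset.sum_le_sum fun i _ => by
      simpa [sq] using half_sq_add_mul_le_mul_add_sq (hc₀ i) (u i) (y i)
  linarith

end DiagonalForms

theorem stmt10 {n : ℕ} (F : Matrix (Fin n) (Fin n) ℝ) (d : Fin n → ℝ)
    (hF : (F + Fᵀ).PosSemidef) (hd : ∀ i, d i = 0 ∨ d i = 1) :
    ∀ (lam : ℝ) (y : Fin n → ℝ), y ≠ 0 →
      ((F - 1) * (1 - (1 / 2 : ℝ) • diagonal d) * (F - 1)ᵀ + F + Fᵀ).mulVec y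
        = lam • ((F + 1) * (1 - (1 / 2 : ℝ) • diagonal d) * (F + 1)ᵀ).mulVec y →
      1 / 2 ≤ lam ∧ lam ≤ 3 := by
  intro lam y hy heq
  set c : Fin n → ℝ := fun i => 1 - d i / 2
  have hD : 1 - (1 / 2 : ℝ) • diagonal d = diagonal c := by
    rw [← diagonal_one, ← diagonal_smul, diagonal_sub]
    congr 1
    ext i
    simp [c, div_eq_inv_mul]
  have hc₀ : ∀ i, 1 / 2 ≤ c i := fun i => by rcases hd i with h | h <;> norm_num [c, h]
  have hc₁ : ∀ i, c i ≤ 1 := fun i => by rcases hd i with h | h <;> norm_num [c, h]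
  set u := Fᵀ *ᵥ y
  have hH : y ⬝ᵥ ((F - 1) * diagonal c * (F - 1)ᵀ + F + Fᵀ) *ᵥ y
      = (u - y) ⬝ᵥ diagonal c *ᵥ (u - y) + 2 * (u ⬝ᵥ y) := by
    have hFm : (F - 1)ᵀ *ᵥ y = u - y := by simp [transpose_sub, sub_mulVec, u]
    rw [add_mulVec, add_mulVec, dotProduct_add, dotProduct_add,
      dotProduct_mul_mul_transpose_mulVec, dotProduct_mulVec_eq_transpose_mulVec_dotProduct F,
      hFm, dotProduct_comm y]
    ring
  have hK : y ⬝ᵥ ((F + 1) * diagonal c * (F + 1)ᵀ) *ᵥ y = (u + y) ⬝ᵥ diagonal c *ᵥ (u + y) := by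
    have hFp : (F + 1)ᵀ *ᵥ y = u + y := by simp [transpose_add, add_mulVec, u]
    rw [dotProduct_mul_mul_transpose_mulVec, hFp]
  have huy : 0 ≤ u ⬝ᵥ y := dotProduct_transpose_mulVec_nonneg hF y
  rw [hD] at heq
  refine mem_Icc_of_mulVec_eq_smul_mulVec ?_ ?_ ?_ heq
  · exact hK ▸ diagonal_form_add_pos hc₀ huy hy
  · linarith [diagonal_form_add_le_two_mul hc₀ hc₁ u y]
  · linarith [diagonal_form_sub_add_le_three_mul hc₀ hc₁ u y]
end

section
/- Let A be symmetric positive definite of size n, B an m×n matrix of full row rank, Ŝ symmetric positive definite of size m. Consider J = [[A, Bᵀ],[B, 0]] and the block diagonal preconditioner P = blkdiag(A, Ŝ). Then every eigenvalue λ of the pencil Jx = λPx is either 1 or has the form (1 ± √(1 + 4σ²))/2, where σ² is an eigenvalue of Ŝ⁻¹(BA⁻¹Bᵀ). -/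
open Matrix

theorem stmt13 {n m : ℕ} (A : Matrix (Fin n) (Fin n) ℝ)
    (B : Matrix (Fin m) (Fin n) ℝ) (Shat : Matrix (Fin m) (Fin m) ℝ)
    (hA : A.PosDef) (hS : Shat.PosDef) (hSs : Shat.IsSymm) (hB : B.rank = m) :
    ∀ (lam : ℝ) (x : Fin n ⊕ Fin m → ℝ), x ≠ 0 →
      (fromBlocks A Bᵀ B 0).mulVec x = lam • (fromBlocks A 0 0 Shat).mulVec x →
      lam = 1 ∨ ∃ σ2 : ℝ,
        (∃ v : Fin m → ℝ, v ≠ 0 ∧ (Shat⁻¹ * (B * A⁻¹ * Bᵀ)).mulVec v = σ2 • v) ∧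
        (lam = (1 + Real.sqrt (1 + 4 * σ2)) / 2 ∨
          lam = (1 - Real.sqrt (1 + 4 * σ2)) / 2) := by
  intro lam x hx heq
  by_cases hl : lam = 1
  · exact Or.inl hl
  right
  set u : Fin n → ℝ := x ∘ Sum.inl with hu
  set p : Fin m → ℝ := x ∘ Sum.inr with hp
  have hxe : x = Sum.elim u p := by funext i; cases i <;> rfl
  rw [hxe, fromBlocks_mulVec, fromBlocks_mulVec] at heq
  have h1 : A.mulVec u + Bᵀ.mulVec p = lam • A.mulVec u := by
    funext i
    have := congrFun heq (Sum.inl i)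
    simpa using this
  have h2 : B.mulVec u = lam • Shat.mulVec p := by
    funext j
    have := congrFun heq (Sum.inr j)
    simpa using this
  have hAdet : IsUnit A.det := isUnit_iff_ne_zero.mpr hA.det_pos.ne'
  have hSdet : IsUnit Shat.det := isUnit_iff_ne_zero.mpr hS.det_pos.ne'
  have hAinv : A⁻¹ * A = 1 := nonsing_inv_mul A hAdet
  have hSinv : Shat⁻¹ * Shat = 1 := nonsing_inv_mul Shat hSdet
  have hBp : Bᵀ.mulVec p = A.mulVec ((lam - 1) • u) := by
    rw [mulVec_smul, sub_smul, one_smul]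
    exact eq_sub_of_add_eq' h1
  have hu2 : A⁻¹.mulVec (Bᵀ.mulVec p) = (lam - 1) • u := by
    rw [hBp, mulVec_mulVec, hAinv, one_mulVec]
  have hpne : p ≠ 0 := by
    intro hp0
    have hu0 : u = 0 := by
      have h0 : (lam - 1) • u = 0 := by
        rw [← hu2, hp0, mulVec_zero, mulVec_zero]
      rcases smul_eq_zero.mp h0 with h | h
      · exact absurd (by linarith [sub_eq_zero.mp (by exact h)] : lam = 1) hl
      · exact h
    apply hx
    rw [hxe, hu0, hp0]
    funext i; cases i <;> rfl
  refine ⟨lam * (lam - 1), ⟨p, hpne, ?_⟩, ?_⟩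
  · have key : (B * A⁻¹ * Bᵀ).mulVec p = Shat.mulVec ((lam * (lam - 1)) • p) := by
      rw [← mulVec_mulVec, ← mulVec_mulVec, hu2, mulVec_smul, h2, mulVec_smul,
        smul_smul, mul_comm (lam - 1) lam]
    rw [← mulVec_mulVec, key, mulVec_mulVec, hSinv, one_mulVec]
  · have hsq : Real.sqrt (1 + 4 * (lam * (lam - 1))) = |2 * lam - 1| := by
      rw [show (1 + 4 * (lam * (lam - 1))) = (2 * lam - 1) ^ 2 by ring,
        Real.sqrt_sq_eq_abs]
    rcases le_or_gt 0 (2 * lam - 1) with h | h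
    · left; rw [hsq, abs_of_nonneg h]; ring
    · right; rw [hsq, abs_of_neg h]; ring
end

section
/- Let A be symmetric positive definite of size n, B ∈ ℝ^{m×n}, J = [[A, Bᵀ],[B, 0]], and Ŝ ∈ ℝ^{m×m} symmetric positive definite. Define the indefinite preconditioner P = [[I,0],[BA⁻¹,I]]·blkdiag(A, −Ŝ)·[[I, A⁻¹Bᵀ],[0,I]]. Then P⁻¹J is similar (via the transformation [[I, A⁻¹Bᵀ],[0,I]]) to blkdiag(I, Ŝ⁻¹S) with S = BA⁻¹Bᵀ; hence spec(P⁻¹J) = {1} ∪ spec(Ŝ⁻¹S). -/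
open Matrix

theorem stmt14 {n m : ℕ} (hn : 0 < n) (A : Matrix (Fin n) (Fin n) ℝ)
    (B : Matrix (Fin m) (Fin n) ℝ) (Shat : Matrix (Fin m) (Fin m) ℝ)
    (hA : A.PosDef) (hS : Shat.PosDef) (hSs : Shat.IsSymm) :
    let S := B * A⁻¹ * Bᵀ
    let J := fromBlocks A Bᵀ B 0
    let P := fromBlocks 1 0 (B * A⁻¹) 1 * fromBlocks A 0 0 (-Shat) *
      fromBlocks 1 (A⁻¹ * Bᵀ) 0 1
    P⁻¹ * J = fromBlocks 1 (-(A⁻¹ * Bᵀ)) 0 1 * fromBlocks 1 0 0 (Shat⁻¹ * S) *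
        fromBlocks 1 (A⁻¹ * Bᵀ) 0 1 ∧
      ∀ lam : ℝ,
        (∃ x : Fin n ⊕ Fin m → ℝ, x ≠ 0 ∧ (P⁻¹ * J).mulVec x = lam • x) ↔
          (lam = 1 ∨ ∃ v : Fin m → ℝ, v ≠ 0 ∧ (Shat⁻¹ * S).mulVec v = lam • v) := by
  intro S J P
  have hAd : IsUnit A.det := isUnit_iff_ne_zero.mpr hA.det_pos.ne'
  have hSd : IsUnit Shat.det := isUnit_iff_ne_zero.mpr hS.det_pos.ne'
  have hA1 : A * A⁻¹ = 1 := mul_nonsing_inv A hAd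
  have hA1' : A⁻¹ * A = 1 := nonsing_inv_mul A hAd
  have hS1 : Shat * Shat⁻¹ = 1 := mul_nonsing_inv Shat hSd
  set X : Matrix (Fin n) (Fin m) ℝ := A⁻¹ * Bᵀ with hX
  set T : Matrix (Fin m) (Fin m) ℝ := Shat⁻¹ * S with hT
  set U : Matrix (Fin n ⊕ Fin m) (Fin n ⊕ Fin m) ℝ := fromBlocks 1 X 0 1 with hU
  set Ui : Matrix (Fin n ⊕ Fin m) (Fin n ⊕ Fin m) ℝ := fromBlocks 1 (-X) 0 1 with hUi
  set K : Matrix (Fin n ⊕ Fin m) (Fin n ⊕ Fin m) ℝ := fromBlocks 1 0 0 T with hK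
  set L : Matrix (Fin n ⊕ Fin m) (Fin n ⊕ Fin m) ℝ := fromBlocks 1 0 (B * A⁻¹) 1 with hL
  set D : Matrix (Fin n ⊕ Fin m) (Fin n ⊕ Fin m) ℝ := fromBlocks A 0 0 (-Shat) with hD
  have hUUi : U * Ui = 1 := by
    rw [hU, hUi, fromBlocks_multiply]
    simp [fromBlocks_one]
  have hUiU : Ui * U = 1 := by
    rw [hU, hUi, fromBlocks_multiply]
    simp [fromBlocks_one]
  have hLunit : IsUnit L.det :=
    Matrix.isUnit_det_of_right_inverse (B := fromBlocks 1 0 (-(B * A⁻¹)) 1) (by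
      rw [hL, fromBlocks_multiply]; simp [fromBlocks_one])
  have hDunit : IsUnit D.det :=
    Matrix.isUnit_det_of_right_inverse (B := fromBlocks A⁻¹ 0 0 (-Shat⁻¹)) (by
      rw [hD, fromBlocks_multiply]; simp [hA1, hS1, fromBlocks_one])
  have hUunit : IsUnit U.det := Matrix.isUnit_det_of_right_inverse hUUi
  have hDK : D * K = fromBlocks A 0 0 (-S) := by
    rw [hD, hK, fromBlocks_multiply]
    simp only [Matrix.mul_one, Matrix.mul_zero, Matrix.zero_mul, Matrix.one_mul,
      add_zero, zero_add]
    congr 1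
    rw [hT, ← Matrix.mul_assoc, Matrix.neg_mul, Matrix.neg_mul, hS1, Matrix.one_mul]
  have hLDK : L * (D * K) = fromBlocks A 0 B (-S) := by
    rw [hDK, hL, fromBlocks_multiply]
    simp only [Matrix.mul_one, Matrix.mul_zero, Matrix.zero_mul, Matrix.one_mul,
      add_zero, zero_add]
    congr 1
    rw [Matrix.mul_assoc, hA1', Matrix.mul_one]
  have hfin : fromBlocks A 0 B (-S) * U = J := by
    rw [hU, fromBlocks_multiply]
    simp only [Matrix.mul_one, Matrix.mul_zero, Matrix.zero_mul, Matrix.one_mul,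
      add_zero, zero_add]
    have hAX : A * X = Bᵀ := by rw [hX, ← Matrix.mul_assoc, hA1, Matrix.one_mul]
    have hBX : B * X + -S = 0 := by
      rw [hX, ← Matrix.mul_assoc]
      exact add_neg_cancel _
    rw [hAX, hBX]
  have h2 : U * (Ui * K * U) = K * U := by
    rw [mul_assoc Ui K U, ← mul_assoc U Ui (K * U), hUUi, one_mul]
  have hfact : P * (Ui * K * U) = J := by
    show L * D * U * (Ui * K * U) = J
    calc L * D * U * (Ui * K * U)
        = L * D * (U * (Ui * K * U)) := by rw [mul_assoc (L * D) U]
      _ = L * D * (K * U) := by rw [h2]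
      _ = L * (D * K) * U := by rw [← mul_assoc (L * D) K U, mul_assoc L D K]
      _ = J := by rw [hLDK, hfin]
  have hPdet : IsUnit P.det := by
    show IsUnit (L * D * U).det
    rw [det_mul, det_mul]
    exact (hLunit.mul hDunit).mul hUunit
  have hmain : P⁻¹ * J = Ui * K * U := by
    rw [← hfact, ← mul_assoc, nonsing_inv_mul P hPdet, one_mul]
  refine ⟨hmain, ?_⟩
  intro lam
  have hMx : ∀ x : Fin n ⊕ Fin m → ℝ,
      ((P⁻¹ * J).mulVec x = lam • x ↔ K.mulVec (U.mulVec x) = lam • U.mulVec x) := by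
    intro x
    rw [hmain]
    constructor
    · intro h
      calc K *ᵥ (U *ᵥ x) = (K * U) *ᵥ x := mulVec_mulVec x K U
        _ = (U * (Ui * K * U)) *ᵥ x := by rw [h2]
        _ = U *ᵥ ((Ui * K * U) *ᵥ x) := (mulVec_mulVec x U (Ui * K * U)).symm
        _ = U *ᵥ (lam • x) := by rw [h]
        _ = lam • (U *ᵥ x) := mulVec_smul U lam x
    · intro h
      calc (Ui * K * U) *ᵥ x = Ui *ᵥ (K *ᵥ (U *ᵥ x)) := by
            rw [mulVec_mulVec, mulVec_mulVec]
        _ = Ui *ᵥ (lam • (U *ᵥ x)) := by rw [h]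
        _ = lam • (Ui *ᵥ (U *ᵥ x)) := mulVec_smul Ui lam (U *ᵥ x)
        _ = lam • x := by rw [mulVec_mulVec, hUiU, one_mulVec]
  constructor
  · rintro ⟨x, hx, hex⟩
    set y := U.mulVec x with hy
    have hKy : K.mulVec y = lam • y := (hMx x).mp hex
    have hy0 : y ≠ 0 := by
      intro h0
      apply hx
      have hx' : Ui.mulVec y = x := by
        rw [hy, mulVec_mulVec, hUiU, one_mulVec]
      rw [h0, mulVec_zero] at hx'
      exact hx'.symm
    rw [hK, fromBlocks_mulVec] at hKy
    simp only [one_mulVec, zero_mulVec, add_zero, zero_add] at hKy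
    have hinl : ∀ i, y (Sum.inl i) = lam * y (Sum.inl i) := by
      intro i
      have := congrFun hKy (Sum.inl i)
      simpa using this
    have hinr : T.mulVec (y ∘ Sum.inr) = lam • (y ∘ Sum.inr) := by
      funext i
      have := congrFun hKy (Sum.inr i)
      simpa using this
    by_cases hu : ∀ i, y (Sum.inl i) = 0
    · right
      refine ⟨y ∘ Sum.inr, ?_, hinr⟩
      intro h0
      apply hy0
      funext s
      cases s with
      | inl i => exact hu i
      | inr i => exact congrFun h0 i
    · left
      push_neg at hu
      obtain ⟨i, hi⟩ := hu
      have h3 : (lam - 1) * y (Sum.inl i) = 0 := by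
        have := hinl i; ring_nf; linarith
      rcases mul_eq_zero.mp h3 with h | h
      · linarith
      · exact absurd h hi
  · rintro (rfl | ⟨v, hv, hTv⟩)
    · refine ⟨Ui.mulVec (Sum.elim (fun _ => (1:ℝ)) 0), ?_, ?_⟩
      · intro h0
        have h1 : U.mulVec (Ui.mulVec (Sum.elim (fun _ => (1:ℝ)) 0)) = 0 := by
          rw [h0, mulVec_zero]
        rw [mulVec_mulVec, hUUi, one_mulVec] at h1
        have := congrFun h1 (Sum.inl ⟨0, hn⟩)
        simpa using this
      · rw [hMx]
        have hUy : U.mulVec (Ui.mulVec (Sum.elim (fun _ => (1:ℝ)) 0)) =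
            Sum.elim (fun _ => (1:ℝ)) 0 := by
          rw [mulVec_mulVec, hUUi, one_mulVec]
        rw [hUy, hK, fromBlocks_mulVec]
        simp
    · refine ⟨Ui.mulVec (Sum.elim (0 : Fin n → ℝ) v), ?_, ?_⟩
      · intro h0
        have h1 : U.mulVec (Ui.mulVec (Sum.elim (0 : Fin n → ℝ) v)) = 0 := by
          rw [h0, mulVec_zero]
        rw [mulVec_mulVec, hUUi, one_mulVec] at h1
        apply hv
        funext i
        exact congrFun h1 (Sum.inr i)
      · rw [hMx]
        have hUy : U.mulVec (Ui.mulVec (Sum.elim (0 : Fin n → ℝ) v)) = Sum.elim (0 : Fin n → ℝ) v := by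
          rw [mulVec_mulVec, hUUi, one_mulVec]
        rw [hUy, hK, fromBlocks_mulVec]
        simp only [Sum.elim_comp_inl, Sum.elim_comp_inr, one_mulVec, zero_mulVec,
          mulVec_zero, add_zero, zero_add, hTv]
        funext s
        cases s <;> simp
end

section
/- With A SPD, B ∈ ℝ^{m×n}, Ŝ SPD, and S = BA⁻¹Bᵀ, suppose Ŝ⁻¹S is diagonalizable: Ŝ⁻¹S X = XΛ with X = [X₁, X₂], Λ = blkdiag(I, Λ₂), where X₁ spans the eigenspace for eigenvalue 1. Then the matrix T = [[I, A⁻¹Bᵀ(I − Ŝ⁻¹S)],[0, Ŝ⁻¹S]] admits the eigendecomposition T = Q·blkdiag(I, I, Λ₂)·Q⁻¹ with Q = [[I, 0, −A⁻¹BᵀX₂],[0, X₁, X₂]]. -/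
/-!
Since `Xᵀ Ŝ X = I`, the eigenvector matrix `X = [X₁, X₂]` is invertible, hence so is the block upper
triangular `Q`, and it suffices to check `T Q = Q · blkdiag(I, I, Λ₂)`. With `P = Ŝ⁻¹S`,
`K = A⁻¹Bᵀ` and `D = blkdiag(I, Λ₂)`, the eigenrelation `P X = X D` gives
`(I - P) X = X (I - D) = [0, X₂] (I - D)`, because `I - D` vanishes on the first block. Hence the
top-right block of `T Q` is `-K [0, X₂] + K [0, X₂] (I - D) = -K [0, X₂] D`, as required.
-/

open Matrix

namespace Matrix

variable {R : Type*} [CommRing R] {m n p q : Type*}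

theorem one_sub_fromBlocks_one_zero_zero [DecidableEq p] [DecidableEq q] (Λ₂ : Matrix q q R) :
    1 - fromBlocks (1 : Matrix p p R) 0 0 Λ₂ = fromBlocks 0 0 0 (1 - Λ₂) := by
  rw [← fromBlocks_one, sub_eq_add_neg, fromBlocks_neg, fromBlocks_add]
  simp [sub_eq_add_neg]

theorem one_sub_mul_fromCols_of_mul_fromCols [Fintype m] [DecidableEq m] [Fintype p]
    [DecidableEq p] [Fintype q] [DecidableEq q] {P : Matrix m m R} {X₁ : Matrix m p R}
    {X₂ : Matrix m q R} {Λ₂ : Matrix q q R}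
    (hP : P * fromCols X₁ X₂ = fromCols X₁ X₂ * fromBlocks (1 : Matrix p p R) 0 0 Λ₂) :
    (1 - P) * fromCols X₁ X₂
      = fromCols (0 : Matrix m p R) X₂ * (1 - fromBlocks (1 : Matrix p p R) 0 0 Λ₂) := by
  rw [Matrix.sub_mul, Matrix.one_mul, hP, one_sub_fromBlocks_one_zero_zero,
    fromCols_mul_fromBlocks, fromCols_mul_fromBlocks]
  ext i (j | j) <;> simp [Matrix.mul_sub]

theorem fromBlocks_mul_fromBlocks_eq_of_mul_fromCols [Fintype m] [DecidableEq m] [Fintype n]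
    [DecidableEq n] [Fintype p] [DecidableEq p] [Fintype q] [DecidableEq q]
    (K : Matrix n m R) {P : Matrix m m R} {X₁ : Matrix m p R} {X₂ : Matrix m q R}
    {Λ₂ : Matrix q q R}
    (hP : P * fromCols X₁ X₂ = fromCols X₁ X₂ * fromBlocks (1 : Matrix p p R) 0 0 Λ₂) :
    fromBlocks (1 : Matrix n n R) (K * (1 - P)) 0 P
        * fromBlocks (1 : Matrix n n R) (fromCols 0 (-(K * X₂))) 0 (fromCols X₁ X₂)
      = fromBlocks (1 : Matrix n n R) (fromCols 0 (-(K * X₂))) 0 (fromCols X₁ X₂)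
          * (fromBlocks 1 0 0 (fromBlocks 1 0 0 Λ₂) : Matrix (n ⊕ p ⊕ q) (n ⊕ p ⊕ q) R) := by
  have hKX₂ : fromCols (0 : Matrix n p R) (-(K * X₂)) = -(K * fromCols 0 X₂) := by
    rw [mul_fromCols, Matrix.mul_zero, fromCols_neg, neg_zero]
  rw [hKX₂, fromBlocks_multiply, fromBlocks_multiply, Matrix.mul_assoc K (1 - P) (fromCols X₁ X₂),
    one_sub_mul_fromCols_of_mul_fromCols hP, hP]
  simp only [Matrix.mul_sub, Matrix.mul_one, Matrix.one_mul, Matrix.mul_zero, Matrix.zero_mul,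
    Matrix.neg_mul, Matrix.mul_assoc, add_zero, zero_add]
  abel_nf

end Matrix

theorem stmt15_general {n k l : ℕ} (A : Matrix (Fin n) (Fin n) ℝ)
    (B : Matrix (Fin k ⊕ Fin l) (Fin n) ℝ)
    (Shat : Matrix (Fin k ⊕ Fin l) (Fin k ⊕ Fin l) ℝ)
    (X₁ : Matrix (Fin k ⊕ Fin l) (Fin k) ℝ)
    (X₂ : Matrix (Fin k ⊕ Fin l) (Fin l) ℝ)
    (Λ₂ : Matrix (Fin l) (Fin l) ℝ)
    (hX : (fromCols X₁ X₂)ᵀ * Shat * fromCols X₁ X₂ = 1)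
    (heig : Shat⁻¹ * (B * A⁻¹ * Bᵀ) * fromCols X₁ X₂
      = fromCols X₁ X₂ * fromBlocks 1 0 0 Λ₂) :
    let S := B * A⁻¹ * Bᵀ
    let T := fromBlocks 1 (A⁻¹ * Bᵀ * (1 - Shat⁻¹ * S)) 0 (Shat⁻¹ * S)
    let Q := fromBlocks 1 (fromCols 0 (-(A⁻¹ * Bᵀ * X₂))) 0 (fromCols X₁ X₂)
    IsUnit Q ∧ T = Q * fromBlocks 1 0 0 (fromBlocks 1 0 0 Λ₂) * Q⁻¹ := by
  intro S T Q
  have hXunit : IsUnit (fromCols X₁ X₂) :=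
    (isUnit_iff_isUnit_det _).mpr (isUnit_det_of_left_inverse hX)
  have hQ : IsUnit Q := isUnit_fromBlocks_zero₂₁.mpr ⟨isUnit_one, hXunit⟩
  have hTQ : T * Q = Q * fromBlocks 1 0 0 (fromBlocks 1 0 0 Λ₂) :=
    fromBlocks_mul_fromBlocks_eq_of_mul_fromCols (A⁻¹ * Bᵀ) heig
  have := hQ.invertible
  exact ⟨hQ, ((mul_inv_eq_iff_eq_mul_of_invertible Q _ _).mpr hTQ.symm).symm⟩

theorem stmt15 {n k l : ℕ} (A : Matrix (Fin n) (Fin n) ℝ)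
    (B : Matrix (Fin k ⊕ Fin l) (Fin n) ℝ)
    (Shat : Matrix (Fin k ⊕ Fin l) (Fin k ⊕ Fin l) ℝ)
    (X₁ : Matrix (Fin k ⊕ Fin l) (Fin k) ℝ)
    (X₂ : Matrix (Fin k ⊕ Fin l) (Fin l) ℝ)
    (Λ₂ : Matrix (Fin l) (Fin l) ℝ)
    (hA : A.PosDef) (hS : Shat.PosDef)
    (hX : (fromCols X₁ X₂)ᵀ * Shat * fromCols X₁ X₂ = 1)
    (heig : Shat⁻¹ * (B * A⁻¹ * Bᵀ) * fromCols X₁ X₂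
      = fromCols X₁ X₂ * fromBlocks 1 0 0 Λ₂) :
    let S := B * A⁻¹ * Bᵀ
    let T := fromBlocks 1 (A⁻¹ * Bᵀ * (1 - Shat⁻¹ * S)) 0 (Shat⁻¹ * S)
    let Q := fromBlocks 1 (fromCols 0 (-(A⁻¹ * Bᵀ * X₂))) 0 (fromCols X₁ X₂)
    IsUnit Q ∧ T = Q * fromBlocks 1 0 0 (fromBlocks 1 0 0 Λ₂) * Q⁻¹ :=
  stmt15_general A B Shat X₁ X₂ Λ₂ hX heig
end

section
/- Let L be a real n×n matrix with L + Lᵀ ≻ 0, M diagonal positive definite, Π diagonal with 0/1 entries, ν > 0. Set Z = (1/√ν) M^{1/2} L⁻¹ M^{1/2} (I − Π). If I−Π = blkdiag(I_ℓ, 0), and F̃⁻¹ = M^{1/2}L⁻¹M^{1/2} has its top-left ℓ×ℓ block with all eigenvalues of strictly positive real part, and F̃⁻¹(I−Π) is diagonalizable (= XΛX⁻¹), then ‖(I+Z)⁻¹‖ ≤ cond(X)·max{ 1/min_{λ∈spec} |1+λ/√ν| , 1 }, and this bound tends to cond(X) as ν → 0. -/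
/-!
Writing `B = X Λ X⁻¹`, the matrix `1 + ν^{-1/2} B` is `X (1 + ν^{-1/2} Λ) X⁻¹`, so its inverse is
`X (1 + ν^{-1/2} Λ)⁻¹ X⁻¹` and has spectral norm at most `cond(X) · maxᵢ |1 + λᵢ/√ν|⁻¹`.
Since `Re λᵢ ≥ 0`, every `|1 + λᵢ/√ν|` is at least `1`, so the maximum in the bound equals `1`
for every `ν > 0` and the bound is the constant `cond(X)`.
-/

open Matrix Filter Topology

noncomputable def specNormC {n : ℕ} (A : Matrix (Fin n) (Fin n) ℂ) : ℝ :=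
  ‖Matrix.toEuclideanCLM (𝕜 := ℂ) A‖

open scoped Matrix.Norms.L2Operator

section Conjugation

variable {ι K : Type*} [Fintype ι] [DecidableEq ι] [Field K] {X : Matrix ι ι K}

theorem one_add_smul_conj_diagonal (hX : IsUnit X) (c : K) (Λ : ι → K) :
    1 + c • (X * diagonal Λ * X⁻¹) = X * diagonal (1 + c • Λ) * X⁻¹ := by
  have hdiag : diagonal (1 + c • Λ) = 1 + c • diagonal Λ := by
    rw [← diagonal_smul, ← diagonal_one, diagonal_add]
    rfl
  rw [hdiag, Matrix.mul_add, Matrix.add_mul, Matrix.mul_one,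
    mul_nonsing_inv X ((isUnit_iff_isUnit_det X).1 hX), Matrix.mul_smul, Matrix.smul_mul]

theorem inv_conj_diagonal (hX : IsUnit X) {w : ι → K} (hw : ∀ i, w i ≠ 0) :
    (X * diagonal w * X⁻¹)⁻¹ = X * diagonal w⁻¹ * X⁻¹ := by
  have hdet := (isUnit_iff_isUnit_det X).1 hX
  refine inv_eq_right_inv ?_
  calc X * diagonal w * X⁻¹ * (X * diagonal w⁻¹ * X⁻¹)
      = X * diagonal w * (X⁻¹ * X) * diagonal w⁻¹ * X⁻¹ := by noncomm_ring
    _ = X * diagonal (w * w⁻¹) * X⁻¹ := by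
        rw [nonsing_inv_mul X hdet, Matrix.mul_one, Matrix.mul_assoc X, diagonal_mul_diagonal]
        rfl
    _ = 1 := by
        rw [show w * w⁻¹ = 1 from funext fun i => mul_inv_cancel₀ (hw i), Pi.one_def,
          diagonal_one, Matrix.mul_one, mul_nonsing_inv X hdet]

end Conjugation

theorem specNormC_eq_norm {n : ℕ} (A : Matrix (Fin n) (Fin n) ℂ) : specNormC A = ‖A‖ := rfl

theorem specNormC_conj_diagonal_le {n : ℕ} (X : Matrix (Fin n) (Fin n) ℂ) (w : Fin n → ℂ) :
    specNormC (X * diagonal w * X⁻¹) ≤ specNormC X * specNormC X⁻¹ * ‖w‖ := by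
  simp only [specNormC_eq_norm]
  calc ‖X * diagonal w * X⁻¹‖ ≤ ‖X‖ * ‖diagonal w‖ * ‖X⁻¹‖ := by
        grw [l2_opNorm_mul, l2_opNorm_mul]
    _ = ‖X‖ * ‖X⁻¹‖ * ‖w‖ := by rw [l2_opNorm_diagonal]; ring

theorem one_le_norm_one_add_div_ofReal {z : ℂ} (hz : 0 ≤ z.re) {s : ℝ} (hs : 0 ≤ s) :
    1 ≤ ‖1 + z / s‖ :=
  calc (1 : ℝ) ≤ (1 + z / s).re := by
        rw [Complex.add_re, Complex.one_re, Complex.div_ofReal_re]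
        linarith [div_nonneg hz hs]
    _ ≤ ‖1 + z / s‖ := Complex.re_le_norm _

theorem norm_inv_le_one_of_one_le_norm {ι 𝕜 : Type*} [Fintype ι] [NormedDivisionRing 𝕜]
    {w : ι → 𝕜} (hw : ∀ i, 1 ≤ ‖w i‖) : ‖w⁻¹‖ ≤ 1 :=
  (pi_norm_le_iff_of_nonneg zero_le_one).2 fun i => by
    simpa using inv_le_one_of_one_le₀ (hw i)

theorem max_inv_inf'_norm_one_add_div_ofReal_eq_one {ι : Type*} [Fintype ι] [Nonempty ι]
    {Λ : ι → ℂ} (hΛ : ∀ i, 0 ≤ (Λ i).re) {s : ℝ} (hs : 0 ≤ s) :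
    max ((Finset.univ.inf' Finset.univ_nonempty fun i => ‖1 + Λ i / (s : ℂ)‖)⁻¹) 1 = 1 :=
  max_eq_right <| inv_le_one_of_one_le₀ <|
    Finset.le_inf' _ _ fun i _ => one_le_norm_one_add_div_ofReal (hΛ i) hs

theorem stmt16_general {n : ℕ} (L : Matrix (Fin (n + 1)) (Fin (n + 1)) ℝ)
    (m d : Fin (n + 1) → ℝ)
    (X : Matrix (Fin (n + 1)) (Fin (n + 1)) ℂ) (hXu : IsUnit X)
    (Λ : Fin (n + 1) → ℂ)
    (hdiag : ((diagonal fun i => Real.sqrt (m i)) * L⁻¹ *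
          (diagonal fun i => Real.sqrt (m i)) * (1 - diagonal d)).map Complex.ofReal
        = X * diagonal Λ * X⁻¹)
    (hre : ∀ i, Λ i = 0 ∨ 0 < (Λ i).re) :
    (∀ ν : ℝ, 0 < ν →
        specNormC ((1 + ((Real.sqrt ν)⁻¹ • ((diagonal fun i => Real.sqrt (m i)) * L⁻¹ *
              (diagonal fun i => Real.sqrt (m i)) * (1 - diagonal d))).map Complex.ofReal)⁻¹)
          ≤ specNormC X * specNormC X⁻¹ *
            max ((Finset.univ.inf' Finset.univ_nonempty
              fun i => ‖1 + Λ i / ((Real.sqrt ν : ℝ) : ℂ)‖)⁻¹) 1) ∧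
      Tendsto (fun ν : ℝ => specNormC X * specNormC X⁻¹ *
          max ((Finset.univ.inf' Finset.univ_nonempty
            fun i => ‖1 + Λ i / ((Real.sqrt ν : ℝ) : ℂ)‖)⁻¹) 1)
        (nhdsWithin 0 (Set.Ioi 0)) (nhds (specNormC X * specNormC X⁻¹)) := by
  have hΛ : ∀ i, 0 ≤ (Λ i).re := fun i => (hre i).elim (fun h => by simp [h]) le_of_lt
  have hmax (ν : ℝ) :=
    max_inv_inf'_norm_one_add_div_ofReal_eq_one hΛ (Real.sqrt_nonneg ν)
  refine ⟨fun ν _ => ?_, by simpa only [hmax, mul_one] using tendsto_const_nhds⟩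
  have hw : ∀ i, 1 ≤ ‖(1 + (Real.sqrt ν : ℂ)⁻¹ • Λ) i‖ := fun i => by
    simpa only [Pi.add_apply, Pi.smul_apply, Pi.one_apply, smul_eq_mul, inv_mul_eq_div] using
      one_le_norm_one_add_div_ofReal (hΛ i) (Real.sqrt_nonneg ν)
  have hw0 : ∀ i, (1 + (Real.sqrt ν : ℂ)⁻¹ • Λ) i ≠ 0 := fun i =>
    norm_pos_iff.1 (zero_lt_one.trans_le (hw i))
  rw [hmax, mul_one, Matrix.map_smulₛₗ _ Complex.ofReal _ fun _ => Complex.ofReal_mul _ _,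
    Complex.ofReal_inv, hdiag, one_add_smul_conj_diagonal hXu, inv_conj_diagonal hXu hw0]
  calc _ ≤ specNormC X * specNormC X⁻¹ * ‖(1 + (Real.sqrt ν : ℂ)⁻¹ • Λ)⁻¹‖ :=
        specNormC_conj_diagonal_le X _
    _ ≤ specNormC X * specNormC X⁻¹ * 1 := by
        gcongr
        · rw [specNormC_eq_norm, specNormC_eq_norm]; positivity
        · exact norm_inv_le_one_of_one_le_norm hw
    _ = _ := mul_one _

theorem stmt16 {n : ℕ} (L : Matrix (Fin (n + 1)) (Fin (n + 1)) ℝ)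
    (m d : Fin (n + 1) → ℝ) (hm : ∀ i, 0 < m i) (hd : ∀ i, d i = 0 ∨ d i = 1)
    (hL : (L + Lᵀ).PosDef)
    (X : Matrix (Fin (n + 1)) (Fin (n + 1)) ℂ) (hXu : IsUnit X)
    (Λ : Fin (n + 1) → ℂ)
    (hdiag : ((diagonal fun i => Real.sqrt (m i)) * L⁻¹ *
          (diagonal fun i => Real.sqrt (m i)) * (1 - diagonal d)).map Complex.ofReal
        = X * diagonal Λ * X⁻¹)
    (hre : ∀ i, Λ i = 0 ∨ 0 < (Λ i).re) :
    (∀ ν : ℝ, 0 < ν →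
        specNormC ((1 + ((Real.sqrt ν)⁻¹ • ((diagonal fun i => Real.sqrt (m i)) * L⁻¹ *
              (diagonal fun i => Real.sqrt (m i)) * (1 - diagonal d))).map Complex.ofReal)⁻¹)
          ≤ specNormC X * specNormC X⁻¹ *
            max ((Finset.univ.inf' Finset.univ_nonempty
              fun i => ‖1 + Λ i / ((Real.sqrt ν : ℝ) : ℂ)‖)⁻¹) 1) ∧
      Tendsto (fun ν : ℝ => specNormC X * specNormC X⁻¹ *
          max ((Finset.univ.inf' Finset.univ_nonempty
            fun i => ‖1 + Λ i / ((Real.sqrt ν : ℝ) : ℂ)‖)⁻¹) 1)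
        (nhdsWithin 0 (Set.Ioi 0)) (nhds (specNormC X * specNormC X⁻¹)) :=
  stmt16_general L m d X hXu Λ hdiag hre
end

section
/- Let F be real n×n with F + Fᵀ ⪰ 0, and let Π be diagonal with 0/1 entries such that F + (I − Π) is invertible (CC case: γ₁=0, γ₂=1). Then every eigenvalue λ of the generalized problem (FFᵀ + (I−Π))y = λ(F + (I−Π))(F + (I−Π))ᵀ y satisfies λ ≥ 1/2. -/
/-!
Since `E := 1 - diagonal d` is a symmetric idempotent,
`(F + E)(F + E)ᵀ + (F - E)(F - E)ᵀ = 2 (F Fᵀ + E)`. Hence `F Fᵀ + E - ½ (F + E)(F + E)ᵀ` is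
positive semidefinite, while `(F + E)(F + E)ᵀ` is positive definite because `F + E` is invertible,
and every eigenvalue of a pencil `A - λ B` with `B ≻ 0` and `A - c B ⪰ 0` is at least `c`.
-/

open Matrix

namespace Matrix

variable {n : Type*} [Fintype n]

theorem isIdempotentElem_diagonal [DecidableEq n] {R : Type*} [Semiring R] {d : n → R}
    (hd : ∀ i, IsIdempotentElem (d i)) : IsIdempotentElem (diagonal d) := by
  rw [IsIdempotentElem, diagonal_mul_diagonal]
  exact congrArg diagonal (funext hd)

theorem add_mul_transpose_add_add_sub_mul_transpose_sub {R : Type*} [CommRing R]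
    (F E : Matrix n n R) (hE : Eᵀ = E) (hEE : IsIdempotentElem E) :
    (F + E) * (F + E)ᵀ + (F - E) * (F - E)ᵀ = (2 : R) • (F * Fᵀ + E) := by
  rw [transpose_add, transpose_sub, hE]
  calc (F + E) * (Fᵀ + E) + (F - E) * (Fᵀ - E) = (2 : R) • (F * Fᵀ + E * E) := by
        simp only [add_mul, mul_add, sub_mul, mul_sub, two_smul]; abel
    _ = (2 : R) • (F * Fᵀ + E) := by rw [hEE.eq]

theorem posSemidef_mul_transpose_add_sub_half_smul {F E : Matrix n n ℝ} (hE : Eᵀ = E)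
    (hEE : IsIdempotentElem E) :
    (F * Fᵀ + E - (1 / 2 : ℝ) • ((F + E) * (F + E)ᵀ)).PosSemidef := by
  have hsplit : F * Fᵀ + E - (1 / 2 : ℝ) • ((F + E) * (F + E)ᵀ)
      = (1 / 2 : ℝ) • ((F - E) * (F - E)ᵀ) := by
    linear_combination (norm := module)
      (-(1 / 2 : ℝ)) • add_mul_transpose_add_add_sub_mul_transpose_sub F E hE hEE
  rw [hsplit]
  simpa using (posSemidef_self_mul_conjTranspose (F - E)).smul (by norm_num : (0 : ℝ) ≤ 1 / 2)

theorem le_of_mulVec_eq_smul_mulVec {A B : Matrix n n ℝ} {c lam : ℝ} {y : n → ℝ}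
    (hAB : (A - c • B).PosSemidef) (hB : B.PosDef) (hy : y ≠ 0)
    (h : A *ᵥ y = lam • B *ᵥ y) : c ≤ lam := by
  have hpos : 0 < y ⬝ᵥ B *ᵥ y := by simpa using hB.dotProduct_mulVec_pos hy
  have hnonneg : 0 ≤ (lam - c) * (y ⬝ᵥ B *ᵥ y) := by
    have := hAB.dotProduct_mulVec_nonneg y
    simp only [star_trivial, sub_mulVec, smul_mulVec, h, dotProduct_sub, dotProduct_smul,
      smul_eq_mul] at this
    linarith
  exact sub_nonneg.mp (nonneg_of_mul_nonneg_left hnonneg hpos)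

end Matrix

theorem stmt18_general {n : ℕ} (F : Matrix (Fin n) (Fin n) ℝ) (d : Fin n → ℝ)
    (hd : ∀ i, d i = 0 ∨ d i = 1)
    (hinv : IsUnit (F + (1 - diagonal d))) :
    ∀ (lam : ℝ) (y : Fin n → ℝ), y ≠ 0 →
      (F * Fᵀ + (1 - diagonal d)).mulVec y
        = lam • ((F + (1 - diagonal d)) * (F + (1 - diagonal d))ᵀ).mulVec y →
      1 / 2 ≤ lam := by
  intro lam y hy hEq
  have hE : IsIdempotentElem (1 - diagonal d) :=
    (isIdempotentElem_diagonal fun i => IsIdempotentElem.iff_eq_zero_or_one.mpr (hd i)).one_sub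
  have hGG : ((F + (1 - diagonal d)) * (F + (1 - diagonal d))ᵀ).PosDef := by
    simpa using PosDef.mul_conjTranspose_self _ (vecMul_injective_iff_isUnit.mpr hinv)
  exact le_of_mulVec_eq_smul_mulVec
    (posSemidef_mul_transpose_add_sub_half_smul (by simp [transpose_sub]) hE) hGG hy hEq

theorem stmt18 {n : ℕ} (F : Matrix (Fin n) (Fin n) ℝ) (d : Fin n → ℝ)
    (hF : (F + Fᵀ).PosSemidef) (hd : ∀ i, d i = 0 ∨ d i = 1)
    (hinv : IsUnit (F + (1 - diagonal d))) :
    ∀ (lam : ℝ) (y : Fin n → ℝ), y ≠ 0 →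
      (F * Fᵀ + (1 - diagonal d)).mulVec y
        = lam • ((F + (1 - diagonal d)) * (F + (1 - diagonal d))ᵀ).mulVec y →
      1 / 2 ≤ lam :=
  stmt18_general F d hd hinv
end

section
/- Let A ∈ ℝ^{n×n} be SPD, B ∈ ℝ^{m×n} of full row rank, Ŝ ∈ ℝ^{m×m} SPD, and suppose every eigenvalue of Ŝ⁻¹(BA⁻¹Bᵀ) lies in [1/2, c] for some c ≥ 1. Then every eigenvalue λ of blkdiag(A, Ŝ)⁻¹·[[A, Bᵀ],[B, 0]] lies in the set {1} ∪ [ (1 − √(1 + 4c²))/2 , (1 − √2)/2 ] ∪ [ (1 + √2)/2 , (1 + √(1 + 4c²))/2 ]. -/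
open Matrix

theorem stmt19 {n m : ℕ} (A : Matrix (Fin n) (Fin n) ℝ)
    (B : Matrix (Fin m) (Fin n) ℝ) (Shat : Matrix (Fin m) (Fin m) ℝ)
    (hA : A.PosDef) (hS : Shat.PosDef) (hSs : Shat.IsSymm) (hB : B.rank = m)
    (c : ℝ) (hc : 1 ≤ c)
    (heig : ∀ μ : ℝ, (∃ v : Fin m → ℝ, v ≠ 0 ∧
        (Shat⁻¹ * (B * A⁻¹ * Bᵀ)).mulVec v = μ • v) → 1 / 2 ≤ μ ∧ μ ≤ c) :
    ∀ (lam : ℝ) (x : Fin n ⊕ Fin m → ℝ), x ≠ 0 →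
      (fromBlocks A Bᵀ B 0).mulVec x = lam • (fromBlocks A 0 0 Shat).mulVec x →
      lam = 1 ∨
        ((1 - Real.sqrt (1 + 4 * c ^ 2)) / 2 ≤ lam ∧ lam ≤ (1 - Real.sqrt 2) / 2) ∨
        ((1 + Real.sqrt 2) / 2 ≤ lam ∧ lam ≤ (1 + Real.sqrt (1 + 4 * c ^ 2)) / 2) := by
  intro lam x hx heq
  by_cases hl : lam = 1
  · exact Or.inl hl
  right
  set x1 : Fin n → ℝ := x ∘ Sum.inl with hx1
  set x2 : Fin m → ℝ := x ∘ Sum.inr with hx2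
  have hxe : x = Sum.elim x1 x2 := by funext i; cases i <;> rfl
  rw [hxe] at heq
  have e1 : A.mulVec x1 + Bᵀ.mulVec x2 = lam • A.mulVec x1 := by
    funext i
    have := congrFun heq (Sum.inl i)
    simpa [Matrix.fromBlocks_mulVec] using this
  have e2 : B.mulVec x1 = lam • Shat.mulVec x2 := by
    funext i
    have := congrFun heq (Sum.inr i)
    simpa [Matrix.fromBlocks_mulVec] using this
  have hAdet : IsUnit A.det := isUnit_iff_ne_zero.mpr (ne_of_gt hA.det_pos)
  have hSdet : IsUnit Shat.det := isUnit_iff_ne_zero.mpr (ne_of_gt hS.det_pos)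
  have hAinv : A⁻¹ * A = 1 := Matrix.nonsing_inv_mul A hAdet
  have hSinv : Shat⁻¹ * Shat = 1 := Matrix.nonsing_inv_mul Shat hSdet
  have e3 : Bᵀ.mulVec x2 = (lam - 1) • A.mulVec x1 := by
    rw [sub_smul, one_smul, ← e1]; abel
  have e4 : (A⁻¹ * Bᵀ).mulVec x2 = (lam - 1) • x1 := by
    have h := congrArg (A⁻¹.mulVec) e3
    rw [Matrix.mulVec_smul, Matrix.mulVec_mulVec, Matrix.mulVec_mulVec, hAinv,
      Matrix.one_mulVec] at h
    exact h
  have hx2ne : x2 ≠ 0 := by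
    intro h0
    have hb0 : Bᵀ.mulVec x2 = 0 := by rw [h0, Matrix.mulVec_zero]
    have hax : A.mulVec x1 = 0 := by
      have : (lam - 1) • A.mulVec x1 = 0 := by rw [← e3, hb0]
      rcases smul_eq_zero.mp this with h | h
      · exact absurd (by linarith [sub_eq_zero.mp h]) hl
      · exact h
    have hx10 : x1 = 0 := by
      have h := congrArg (A⁻¹.mulVec) hax
      rwa [Matrix.mulVec_mulVec, hAinv, Matrix.one_mulVec, Matrix.mulVec_zero] at h
    apply hx
    funext i
    cases i with
    | inl i => exact congrFun hx10 i
    | inr i => exact congrFun h0 i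
  have e5 : (Shat⁻¹ * (B * A⁻¹ * Bᵀ)).mulVec x2 = (lam * (lam - 1)) • x2 := by
    have h1 : (B * A⁻¹ * Bᵀ).mulVec x2 = (lam * (lam - 1)) • Shat.mulVec x2 := by
      have : (B * A⁻¹ * Bᵀ).mulVec x2 = B.mulVec ((A⁻¹ * Bᵀ).mulVec x2) := by
        rw [Matrix.mulVec_mulVec, Matrix.mul_assoc]
      rw [this, e4, Matrix.mulVec_smul, e2, smul_smul, mul_comm]
    have h := congrArg (Shat⁻¹.mulVec) h1
    rw [Matrix.mulVec_mulVec, Matrix.mulVec_smul, Matrix.mulVec_mulVec, hSinv,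
      Matrix.one_mulVec] at h
    exact h
  obtain ⟨hμ1, hμ2⟩ := heig (lam * (lam - 1)) ⟨x2, hx2ne, e5⟩
  -- arithmetic
  have h2' : (2 * lam - 1) ^ 2 ≤ 1 + 4 * c ^ 2 := by nlinarith
  have h1' : (2 : ℝ) ≤ (2 * lam - 1) ^ 2 := by nlinarith
  have hs2 : Real.sqrt 2 ≤ |2 * lam - 1| := by
    rw [← Real.sqrt_sq_eq_abs]; exact Real.sqrt_le_sqrt h1'
  have hs3 : |2 * lam - 1| ≤ Real.sqrt (1 + 4 * c ^ 2) := by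
    rw [← Real.sqrt_sq_eq_abs]; exact Real.sqrt_le_sqrt h2'
  rcases le_or_gt 0 (2 * lam - 1) with hpos | hneg
  · right
    rw [abs_of_nonneg hpos] at hs2 hs3
    constructor <;> linarith
  · left
    rw [abs_of_neg hneg] at hs2 hs3
    constructor <;> linarith
end
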